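/- Let H : ℝ^d × ℝ^d → ℝ be C¹ with partial gradients ∇₁H, ∇₂H, let 𝔅 be a symmetric real d×d matrix, and let η > 0. For a sequence U ∈ (ℝ^d)^ℤ set δH[U]_j = ∇₁H(U_j, η(U_{j+1} − U_j)) + η[∇₂H(U_{j−1}, η(U_j − U_{j−1})) − ∇₂H(U_j, η(U_{j+1} − U_j))] and (J V)_j = (η/2) 𝔅 (V_{j+1} − V_{j−1}). If U : ℝ → (ℝ^d)^ℤ is componentwise differentiable and satisfies dU_j/dt = (J δH[U(t)])_j for all j ∈ ℤ and t ∈ ℝ, then for all j and t the local conservation law d/dt H(U_j(t), η(U_{j+1}(t) − U_j(t))) = η (s_{j+1}(t) − s_j(t)) holds, where s_j = ½ δH[U]_{j−1} · 𝔅 δH[U]_j + ∇₂H(U_{j−1}, η(U_j − U_{j−1})) · (J δH[U])_j. -/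

import Mathlib

/-- First partial gradient `∇₁H` of `H : ℝ^d × ℝ^d → ℝ`. -/
noncomputable def grad1 {d : ℕ} (H : (Fin d → ℝ) → (Fin d → ℝ) → ℝ) (x y : Fin d → ℝ) :
    Fin d → ℝ :=
  fun i => fderiv ℝ (fun x' => H x' y) x (Pi.single i 1)

/-- Second partial gradient `∇₂H` of `H : ℝ^d × ℝ^d → ℝ`. -/
noncomputable def grad2 {d : ℕ} (H : (Fin d → ℝ) → (Fin d → ℝ) → ℝ) (x y : Fin d → ℝ) :
    Fin d → ℝ :=
  fun i => fderiv ℝ (fun y' => H x y') y (Pi.single i 1)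

/-- The discrete variational derivative
`δH[U]_j = ∇₁H(U_j, η(U_{j+1}−U_j)) + η[∇₂H(U_{j−1}, η(U_j−U_{j−1})) − ∇₂H(U_j, η(U_{j+1}−U_j))]`. -/
noncomputable def deltaH {d : ℕ} (η : ℝ) (H : (Fin d → ℝ) → (Fin d → ℝ) → ℝ)
    (U : ℤ → Fin d → ℝ) (j : ℤ) : Fin d → ℝ :=
  grad1 H (U j) (η • (U (j+1) - U j))
    + η • (grad2 H (U (j-1)) (η • (U j - U (j-1))) - grad2 H (U j) (η • (U (j+1) - U j)))

/-- The local energy flux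
`s_j = ½ δH[U]_{j−1} · 𝔅 δH[U]_j + ∇₂H(U_{j−1}, η(U_j−U_{j−1})) · (J δH[U])_j`. -/
noncomputable def energyFlux {d : ℕ} (η : ℝ) (H : (Fin d → ℝ) → (Fin d → ℝ) → ℝ)
    (𝔅 : Fin d → Fin d → ℝ) (U : ℤ → Fin d → ℝ) (j : ℤ) : ℝ :=
  (1/2) * (∑ i : Fin d, deltaH η H U (j-1) i * ∑ l : Fin d, 𝔅 i l * deltaH η H U j l)
    + ∑ i : Fin d, grad2 H (U (j-1)) (η • (U j - U (j-1))) i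
        * ((η/2) * ∑ l : Fin d, 𝔅 i l * (deltaH η H U (j+1) l - deltaH η H U (j-1) l))

/-!
Write `F`, `G` for the partial gradients of `H` at `(U_j, η(U_{j+1} − U_j))` and `G'` for `∇₂H`
one site to the left, so that `δH[U]_j = F + η (G' − G)`. By the chain rule the local energy has
time derivative `F · (J δH)_j + η G · ((J δH)_{j+1} − (J δH)_j)`. Since `𝔅` is symmetric,
`δ_j · (J δ)_j = (η/2) (δ_j · 𝔅 δ_{j+1} − δ_{j−1} · 𝔅 δ_j)` is a discrete difference, and
substituting the decomposition of `δ_j` turns the derivative into `η (s_{j+1} − s_j)`.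
-/

open Matrix

theorem LinearMap.apply_eq_dotProduct_single {ι R : Type*} [Fintype ι] [DecidableEq ι]
    [CommSemiring R] (M : (ι → R) →ₗ[R] R) (v : ι → R) :
    M v = (fun i => M (Pi.single i 1)) ⬝ᵥ v := by
  conv_lhs => rw [pi_eq_sum_univ' v]
  simp [dotProduct, mul_comm]

theorem fderiv_uncurry_apply_eq_grad {d : ℕ} {H : (Fin d → ℝ) → (Fin d → ℝ) → ℝ}
    {a b : Fin d → ℝ}
    (hH : DifferentiableAt ℝ (fun p : (Fin d → ℝ) × (Fin d → ℝ) => H p.1 p.2) (a, b))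
    (v w : Fin d → ℝ) :
    fderiv ℝ (fun p : (Fin d → ℝ) × (Fin d → ℝ) => H p.1 p.2) (a, b) (v, w)
      = grad1 H a b ⬝ᵥ v + grad2 H a b ⬝ᵥ w := by
  set L := fderiv ℝ (fun p : (Fin d → ℝ) × (Fin d → ℝ) => H p.1 p.2) (a, b)
  have h1 : HasFDerivAt (fun x => H x b) (L.comp (.inl ℝ _ _)) a :=
    hH.hasFDerivAt.comp a (f := fun x => (x, b)) (hasFDerivAt_prodMk_left a b)
  have h2 : HasFDerivAt (fun y => H a y) (L.comp (.inr ℝ _ _)) b :=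
    hH.hasFDerivAt.comp b (f := fun y => (a, y)) (hasFDerivAt_prodMk_right a b)
  have hvw : ((v, w) : (Fin d → ℝ) × (Fin d → ℝ))
      = ContinuousLinearMap.inl ℝ _ _ v + ContinuousLinearMap.inr ℝ _ _ w := by simp
  unfold grad1 grad2
  rw [hvw, map_add, h1.fderiv, h2.fderiv]
  exact congrArg₂ (· + ·)
    ((L.comp (.inl ℝ _ _)).toLinearMap.apply_eq_dotProduct_single v)
    ((L.comp (.inr ℝ _ _)).toLinearMap.apply_eq_dotProduct_single w)

theorem HasDerivAt.comp_grad {d : ℕ} {H : (Fin d → ℝ) → (Fin d → ℝ) → ℝ}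
    {x y : ℝ → Fin d → ℝ} {x' y' : Fin d → ℝ} {t : ℝ}
    (hH : DifferentiableAt ℝ (fun p : (Fin d → ℝ) × (Fin d → ℝ) => H p.1 p.2) (x t, y t))
    (hx : HasDerivAt x x' t) (hy : HasDerivAt y y' t) :
    HasDerivAt (fun s => H (x s) (y s))
      (grad1 H (x t) (y t) ⬝ᵥ x' + grad2 H (x t) (y t) ⬝ᵥ y') t := by
  rw [← fderiv_uncurry_apply_eq_grad hH]
  exact hH.hasFDerivAt.comp_hasDerivAt t (hx.prodMk hy)

/-- The operator `J = D 𝔅` of the lattice system. -/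
noncomputable def latticeJ {ι : Type*} [Fintype ι] (η : ℝ) (B : Matrix ι ι ℝ) (V : ℤ → ι → ℝ)
    (j : ℤ) : ι → ℝ :=
  (η / 2) • (B *ᵥ (V (j + 1) - V (j - 1)))

theorem dotProduct_latticeJ {ι : Type*} [Fintype ι] {B : Matrix ι ι ℝ} (hB : B.IsSymm) (η : ℝ)
    (V : ℤ → ι → ℝ) (j : ℤ) :
    V j ⬝ᵥ latticeJ η B V j
      = η * ((1 / 2) * (V j ⬝ᵥ B *ᵥ V (j + 1)) - (1 / 2) * (V (j - 1) ⬝ᵥ B *ᵥ V j)) := by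
  have hswap : V j ⬝ᵥ B *ᵥ V (j - 1) = V (j - 1) ⬝ᵥ B *ᵥ V j := by
    simpa only [hB.eq] using dotProduct_transpose_mulVec B (V j) (V (j - 1))
  rw [latticeJ, dotProduct_smul, mulVec_sub, dotProduct_sub, hswap, smul_eq_mul]
  ring

theorem latticeJ_energy_balance {ι : Type*} [Fintype ι] {B : Matrix ι ι ℝ} (hB : B.IsSymm)
    (η : ℝ) (V : ℤ → ι → ℝ) (j : ℤ) (F G G' : ι → ℝ) (hV : V j = F + η • (G' - G)) :
    η * ((1 / 2) * (V j ⬝ᵥ B *ᵥ V (j + 1)) + G ⬝ᵥ latticeJ η B V (j + 1)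
        - ((1 / 2) * (V (j - 1) ⬝ᵥ B *ᵥ V j) + G' ⬝ᵥ latticeJ η B V j))
      = F ⬝ᵥ latticeJ η B V j + G ⬝ᵥ (η • (latticeJ η B V (j + 1) - latticeJ η B V j)) := by
  have hsplit : V j ⬝ᵥ latticeJ η B V j
      = F ⬝ᵥ latticeJ η B V j + η * (G' ⬝ᵥ latticeJ η B V j - G ⬝ᵥ latticeJ η B V j) := by
    rw [hV, add_dotProduct, smul_dotProduct, sub_dotProduct, smul_eq_mul]
  rw [dotProduct_smul, dotProduct_sub, smul_eq_mul]
  linear_combination hsplit - dotProduct_latticeJ hB η V j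

theorem energyFlux_eq_dotProduct {d : ℕ} (η : ℝ) (H : (Fin d → ℝ) → (Fin d → ℝ) → ℝ)
    (𝔅 : Fin d → Fin d → ℝ) (U : ℤ → Fin d → ℝ) (j : ℤ) :
    energyFlux η H 𝔅 U j
      = (1 / 2) * (deltaH η H U (j - 1) ⬝ᵥ (𝔅 : Matrix (Fin d) (Fin d) ℝ) *ᵥ deltaH η H U j)
        + grad2 H (U (j - 1)) (η • (U j - U (j - 1))) ⬝ᵥ latticeJ η 𝔅 (deltaH η H U) j :=
  rfl

theorem hamiltonian_local_conservation_law_general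
    (d : ℕ) (η : ℝ)
    (H : (Fin d → ℝ) → (Fin d → ℝ) → ℝ)
    (hH : ContDiff ℝ 1 (fun p : (Fin d → ℝ) × (Fin d → ℝ) => H p.1 p.2))
    (𝔅 : Fin d → Fin d → ℝ) (hsym : ∀ i l : Fin d, 𝔅 i l = 𝔅 l i)
    (U : ℝ → ℤ → Fin d → ℝ)
    (hU : ∀ (j : ℤ) (t : ℝ), HasDerivAt (fun t' => U t' j)
      ((η/2) • fun i : Fin d => ∑ l : Fin d,
        𝔅 i l * (deltaH η H (U t) (j+1) l - deltaH η H (U t) (j-1) l)) t) :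
    ∀ (j : ℤ) (t : ℝ), HasDerivAt (fun t' => H (U t' j) (η • (U t' (j+1) - U t' j)))
      (η * (energyFlux η H 𝔅 (U t) (j+1) - energyFlux η H 𝔅 (U t) j)) t := by
  intro j t
  have h𝔅 : IsSymm 𝔅 := IsSymm.ext fun i l => hsym l i
  have hx : HasDerivAt (fun t' => U t' j) (latticeJ η 𝔅 (deltaH η H (U t)) j) t := hU j t
  have hy : HasDerivAt (fun t' => η • (U t' (j + 1) - U t' j))
      (η • (latticeJ η 𝔅 (deltaH η H (U t)) (j + 1) - latticeJ η 𝔅 (deltaH η H (U t)) j)) t :=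
    ((hU (j + 1) t).sub (hU j t)).const_smul η
  convert hx.comp_grad (hH.differentiable one_ne_zero _) hy using 1
  rw [energyFlux_eq_dotProduct, energyFlux_eq_dotProduct, add_sub_cancel_right]
  exact latticeJ_energy_balance h𝔅 η _ j _ _ _ rfl

/-- Along any solution of the Hamiltonian lattice system `dU/dt = J δH[U]`,
the local conservation law
`d/dt H(U_j, η(U_{j+1}−U_j)) = η (s_{j+1} − s_j)` holds. -/
theorem hamiltonian_local_conservation_law
    (d : ℕ) (hd : 0 < d) (η : ℝ) (hη : 0 < η)
    (H : (Fin d → ℝ) → (Fin d → ℝ) → ℝ)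
    (hH : ContDiff ℝ 1 (fun p : (Fin d → ℝ) × (Fin d → ℝ) => H p.1 p.2))
    (𝔅 : Fin d → Fin d → ℝ) (hsym : ∀ i l : Fin d, 𝔅 i l = 𝔅 l i)
    (U : ℝ → ℤ → Fin d → ℝ)
    (hU : ∀ (j : ℤ) (t : ℝ), HasDerivAt (fun t' => U t' j)
      ((η/2) • fun i : Fin d => ∑ l : Fin d,
        𝔅 i l * (deltaH η H (U t) (j+1) l - deltaH η H (U t) (j-1) l)) t) :
    ∀ (j : ℤ) (t : ℝ), HasDerivAt (fun t' => H (U t' j) (η • (U t' (j+1) - U t' j)))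
      (η * (energyFlux η H 𝔅 (U t) (j+1) - energyFlux η H 𝔅 (U t) j)) t :=
  hamiltonian_local_conservation_law_general d η H hH 𝔅 hsym U hU
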